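/- Let {θ_j}_{j∈J} be a family of functions on ℝⁿ with 0 ≤ θ_j ≤ 1, Lipschitz constant Lip(θ_j) ≤ C₀/δ for a fixed δ > 0, Σ_{j∈J} θ_j ≡ 1 on an open set U, and such that each point of U lies in the support of at most K of the θ_j. Let {p_j}_{j∈J} ⊆ Hom(ℝⁿ, ℝⁿ) be linear maps such that |p_i − p_j| ≤ ν whenever supp θ_i ∩ supp θ_j ∩ U ≠ ∅. Then the map p̃(x) = Σ_j θ_j(x) p_j satisfies: (a) for every x ∈ U and every j₀ with θ_{j₀}(x) ≠ 0, |p̃(x) − p_{j₀}| ≤ ν; and (b) |p̃(y) − p̃(z)| ≤ 2K·C₀·ν·|y − z|/δ for all y, z ∈ U lying in a common ball on which the same at-most-2K indices are active. -/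

import Mathlib

/-!
Part (a) is convexity of the closed ball of radius `ν` about `p j₀`: `p̃(x)` is a convex
combination of the `p j` with `θ j x ≠ 0`, all of which lie in that ball. For part (b) the weight
differences `θ j y - θ j z` sum to zero, so `p̃(y) - p̃(z) = ∑ (θ j y - θ j z) • (p j - p j₀)`,
and each of the at most `2K` terms is bounded by `(C₀ / δ) ‖y - z‖ ν`.
-/

open Finset Function

theorem norm_sum_smul_le_of_sum_eq_zero {ι E : Type*} [SeminormedAddCommGroup E]
    [NormedSpace ℝ E] {s : Finset ι} {c : ι → ℝ} {v : ι → E} {ν : ℝ}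
    (hc : ∑ i ∈ s, c i = 0) (hv : ∀ i ∈ s, ∀ k ∈ s, ‖v i - v k‖ ≤ ν) :
    ‖∑ i ∈ s, c i • v i‖ ≤ (∑ i ∈ s, |c i|) * ν := by
  rcases s.eq_empty_or_nonempty with rfl | ⟨k, hk⟩
  · simp
  have hshift : ∑ i ∈ s, c i • v i = ∑ i ∈ s, c i • (v i - v k) := by
    simp only [smul_sub, sum_sub_distrib, ← sum_smul, hc, zero_smul, sub_zero]
  calc ‖∑ i ∈ s, c i • v i‖
      = ‖∑ i ∈ s, c i • (v i - v k)‖ := by rw [hshift]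
    _ ≤ ∑ i ∈ s, |c i| * ‖v i - v k‖ := by
        simpa only [norm_smul, Real.norm_eq_abs] using norm_sum_le s fun i => c i • (v i - v k)
    _ ≤ ∑ i ∈ s, |c i| * ν := by
        gcongr with i hi
        exact hv i hi k hk
    _ = (∑ i ∈ s, |c i|) * ν := (sum_mul ..).symm

theorem finsum_smul_sub_finsum_smul {ι R M : Type*} [Ring R] [AddCommGroup M] [Module R M]
    {w₁ w₂ : ι → R} {v : ι → M} {s : Finset ι}
    (h₁ : support w₁ ⊆ s) (h₂ : support w₂ ⊆ s) :
    ∑ᶠ i, w₁ i • v i - ∑ᶠ i, w₂ i • v i = ∑ i ∈ s, (w₁ i - w₂ i) • v i := by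
  rw [finsum_eq_sum_of_support_subset (fun i => w₁ i • v i)
      ((support_smul_subset_left w₁ v).trans h₁),
    finsum_eq_sum_of_support_subset (fun i => w₂ i • v i)
      ((support_smul_subset_left w₂ v).trans h₂)]
  simp only [sub_smul, sum_sub_distrib]

theorem partition_of_unity_gluing_general {n : ℕ} {J : Type*}
    (U : Set (EuclideanSpace ℝ (Fin n)))
    (θf : J → EuclideanSpace ℝ (Fin n) → ℝ)
    (p : J → EuclideanSpace ℝ (Fin n) →L[ℝ] EuclideanSpace ℝ (Fin n))
    (C₀ δ ν : ℝ) (hC₀ : 0 < C₀) (hδ : 0 < δ) (hν : 0 ≤ ν) (K : ℕ)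
    (hθ01 : ∀ j x, 0 ≤ θf j x ∧ θf j x ≤ 1)
    (hθlip : ∀ j, LipschitzWith (Real.toNNReal (C₀ / δ)) (θf j))
    (hsum : ∀ x ∈ U, ∑ᶠ j, θf j x = 1)
    (hclose : ∀ i j : J,
      (Function.support (θf i) ∩ Function.support (θf j) ∩ U).Nonempty → ‖p i - p j‖ ≤ ν) :
    (∀ x ∈ U, ∀ j₀ : J, θf j₀ x ≠ 0 → ‖(∑ᶠ j, θf j x • p j) - p j₀‖ ≤ ν) ∧
    (∀ y ∈ U, ∀ z ∈ U, ∀ s : Finset J, s.card ≤ 2 * K →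
      (∀ j, (θf j y ≠ 0 ∨ θf j z ≠ 0) → j ∈ s) →
      (∀ i ∈ s, ∀ k ∈ s, ‖p i - p k‖ ≤ ν) →
      ‖(∑ᶠ j, θf j y • p j) - (∑ᶠ j, θf j z • p j)‖ ≤ 2 * K * C₀ * ν * ‖y - z‖ / δ) := by
  refine ⟨fun x hx j₀ hj₀ => ?_, fun y hy z hz s hsK hs hpc => ?_⟩
  · rw [← mem_closedBall_iff_norm]
    exact (convex_closedBall (p j₀) ν).finsum_mem (fun j => (hθ01 j x).1) (hsum x hx)
      fun j hj => mem_closedBall_iff_norm.mpr (hclose j j₀ ⟨x, ⟨hj, hj₀⟩, hx⟩)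
  have hy' : support (θf · y) ⊆ s := fun j hj => hs j (Or.inl hj)
  have hz' : support (θf · z) ⊆ s := fun j hj => hs j (Or.inr hj)
  have hdiff : ∑ j ∈ s, (θf j y - θf j z) = 0 := by
    rw [sum_sub_distrib, ← finsum_eq_sum_of_support_subset _ hy',
      ← finsum_eq_sum_of_support_subset _ hz', hsum y hy, hsum z hz, sub_self]
  have hlip : ∀ j, |θf j y - θf j z| ≤ C₀ / δ * ‖y - z‖ := fun j => by
    simpa only [dist_eq_norm, Real.norm_eq_abs, Real.coe_toNNReal _ (div_pos hC₀ hδ).le]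
      using (hθlip j).dist_le_mul y z
  calc ‖(∑ᶠ j, θf j y • p j) - (∑ᶠ j, θf j z • p j)‖
      = ‖∑ j ∈ s, (θf j y - θf j z) • p j‖ := congrArg norm (finsum_smul_sub_finsum_smul hy' hz')
    _ ≤ (∑ j ∈ s, |θf j y - θf j z|) * ν := norm_sum_smul_le_of_sum_eq_zero hdiff hpc
    _ ≤ (s.card * (C₀ / δ * ‖y - z‖)) * ν := by
        gcongr
        simpa using sum_le_card_nsmul s _ _ fun j _ => hlip j
    _ ≤ (2 * K * (C₀ / δ * ‖y - z‖)) * ν := by gcongr; exact_mod_cast hsK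
    _ = 2 * K * C₀ * ν * ‖y - z‖ / δ := by ring

/-- Gluing nearly-equal linear maps by a Lipschitz partition of unity: the averaged map
`p̃(x) = Σⱼ θⱼ(x) pⱼ` stays `ν`-close to each active `p_{j₀}`, and is Lipschitz with
constant `2K C₀ ν / δ` on regions where a common family of at most `2K` pairwise
`ν`-close indices is active. -/
theorem partition_of_unity_gluing {n : ℕ} {J : Type*}
    (U : Set (EuclideanSpace ℝ (Fin n)))
    (θf : J → EuclideanSpace ℝ (Fin n) → ℝ)
    (p : J → EuclideanSpace ℝ (Fin n) →L[ℝ] EuclideanSpace ℝ (Fin n))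
    (C₀ δ ν : ℝ) (hC₀ : 0 < C₀) (hδ : 0 < δ) (hν : 0 ≤ ν) (K : ℕ)
    (hθ01 : ∀ j x, 0 ≤ θf j x ∧ θf j x ≤ 1)
    (hθlip : ∀ j, LipschitzWith (Real.toNNReal (C₀ / δ)) (θf j))
    (hcard : ∀ x ∈ U, ∃ s : Finset J, s.card ≤ K ∧ ∀ j, θf j x ≠ 0 → j ∈ s)
    (hsum : ∀ x ∈ U, ∑ᶠ j, θf j x = 1)
    (hclose : ∀ i j : J,
      (Function.support (θf i) ∩ Function.support (θf j) ∩ U).Nonempty → ‖p i - p j‖ ≤ ν) :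
    (∀ x ∈ U, ∀ j₀ : J, θf j₀ x ≠ 0 → ‖(∑ᶠ j, θf j x • p j) - p j₀‖ ≤ ν) ∧
    (∀ y ∈ U, ∀ z ∈ U, ∀ s : Finset J, s.card ≤ 2 * K →
      (∀ j, (θf j y ≠ 0 ∨ θf j z ≠ 0) → j ∈ s) →
      (∀ i ∈ s, ∀ k ∈ s, ‖p i - p k‖ ≤ ν) →
      ‖(∑ᶠ j, θf j y • p j) - (∑ᶠ j, θf j z • p j)‖ ≤ 2 * K * C₀ * ν * ‖y - z‖ / δ) :=
  partition_of_unity_gluing_general U θf p C₀ δ ν hC₀ hδ hν K hθ01 hθlip hsum hclose
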